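/- Proposition 9, MR part (signed form proved in the appendix). Let ε ∈ ℝ and let the MR weight function be ω_MR(x,c,a) = w(a,x) + ε. Assume Assumption A3 (reward homogeneity, with cluster-level mean reward q̄) and q̄ a c ≥ 0 for all a, c. Then Bias(ω_MR) − Bias(ω_CHIPS) = − Σ_c p(c) · Σ_x p(x|c) · Σ_{a : π₀ x a = 0 and p(a|c,π₀) > 0} π x a · q̄ a c + ε · Σ_c p(c) · Σ_a p(a|c,π₀) · q̄ a c, where ω_CHIPS(x,c,a) = w(a,c). -/

import Mathlib

open Finset

namespace OPE

noncomputable section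

variable {X C A : Type*} [Fintype X] [Fintype C] [Fintype A]
  [Nonempty X] [Nonempty C] [Nonempty A]

/-- Cluster marginal `p(c) = Σ_x pX x * pC x c`. -/
def pc (pX : X → ℝ) (pC : X → C → ℝ) (c : C) : ℝ :=
  ∑ x, pX x * pC x c

/-- Conditional context distribution `p(x|c)` (zero when `p(c) = 0`). -/
def pxc (pX : X → ℝ) (pC : X → C → ℝ) (x : X) (c : C) : ℝ :=
  pX x * pC x c / pc pX pC c

/-- `p(a|c,ρ) = Σ_x p(x|c) * ρ x a`. -/
def pac (pX : X → ℝ) (pC : X → C → ℝ) (ρ : X → A → ℝ) (c : C) (a : A) : ℝ :=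
  ∑ x, pxc pX pC x c * ρ x a

/-- IPS weight `w(a,x) = π x a / π₀ x a` (with the convention `t/0 = 0`). -/
def wIPS (π π₀ : X → A → ℝ) (a : A) (x : X) : ℝ := π x a / π₀ x a

/-- CHIPS weight `w(a,c) = p(a|c,π) / p(a|c,π₀)` (with the convention `t/0 = 0`). -/
def wCHIPS (pX : X → ℝ) (pC : X → C → ℝ) (π π₀ : X → A → ℝ) (a : A) (c : C) : ℝ :=
  pac pX pC π c a / pac pX pC π₀ c a

/-- Policy value `V(π)`. -/
def V (pX : X → ℝ) (pC : X → C → ℝ) (π : X → A → ℝ) (q : A → C → X → ℝ) : ℝ :=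
  ∑ x, ∑ c, ∑ a, pX x * pC x c * π x a * q a c x

/-- Single-sample mean of a weighted estimator under the logging distribution. -/
def mu (pX : X → ℝ) (pC : X → C → ℝ) (π₀ : X → A → ℝ) (q : A → C → X → ℝ)
    (ω : X → C → A → ℝ) : ℝ :=
  ∑ x, ∑ c, ∑ a, (pX x * pC x c * π₀ x a) * ω x c a * q a c x

/-- Bias of a weighted estimator. -/
def bias (pX : X → ℝ) (pC : X → C → ℝ) (π π₀ : X → A → ℝ) (q : A → C → X → ℝ)
    (ω : X → C → A → ℝ) : ℝ :=
  mu pX pC π₀ q ω - V pX pC π q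

/-- Single-sample variance of a weighted estimator. -/
def varW (pX : X → ℝ) (pC : X → C → ℝ) (π₀ : X → A → ℝ) (q m2 : A → C → X → ℝ)
    (ω : X → C → A → ℝ) : ℝ :=
  (∑ x, ∑ c, ∑ a, (pX x * pC x c * π₀ x a) * ω x c a ^ 2 * m2 a c x)
    - (mu pX pC π₀ q ω) ^ 2

/-- Single-sample mean squared error of a weighted estimator. -/
def mseW (pX : X → ℝ) (pC : X → C → ℝ) (π π₀ : X → A → ℝ) (q m2 : A → C → X → ℝ)
    (ω : X → C → A → ℝ) : ℝ :=
  (∑ x, ∑ c, ∑ a, (pX x * pC x c * π₀ x a) * ω x c a ^ 2 * m2 a c x)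
    - 2 * V pX pC π q * mu pX pC π₀ q ω + (V pX pC π q) ^ 2


section Aux

variable (pX : X → ℝ) (pC : X → C → ℝ)

lemma pc_nonneg' (hpX0 : ∀ x, 0 ≤ pX x) (hpC0 : ∀ x c, 0 ≤ pC x c) (c : C) :
    0 ≤ pc pX pC c :=
  Finset.sum_nonneg fun x _ => mul_nonneg (hpX0 x) (hpC0 x c)

lemma pXpC_eq_zero' (hpX0 : ∀ x, 0 ≤ pX x) (hpC0 : ∀ x c, 0 ≤ pC x c) {c : C}
    (h : pc pX pC c = 0) (x : X) : pX x * pC x c = 0 :=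
  (Finset.sum_eq_zero_iff_of_nonneg
    (fun x _ => mul_nonneg (hpX0 x) (hpC0 x c))).1 h x (Finset.mem_univ x)

lemma pc_mul_pxc' (hpX0 : ∀ x, 0 ≤ pX x) (hpC0 : ∀ x c, 0 ≤ pC x c) (x : X) (c : C) :
    pc pX pC c * pxc pX pC x c = pX x * pC x c := by
  by_cases h : pc pX pC c = 0
  · rw [h, zero_mul, pXpC_eq_zero' pX pC hpX0 hpC0 h x]
  · unfold pxc; field_simp

lemma pc_mul_pac' (hpX0 : ∀ x, 0 ≤ pX x) (hpC0 : ∀ x c, 0 ≤ pC x c)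
    (ρ : X → A → ℝ) (c : C) (a : A) :
    pc pX pC c * pac pX pC ρ c a = ∑ x, pX x * pC x c * ρ x a := by
  unfold pac
  rw [Finset.mul_sum]
  exact Finset.sum_congr rfl fun x _ => by
    rw [← mul_assoc, pc_mul_pxc' pX pC hpX0 hpC0 x c]

lemma pxc_nonneg' (hpX0 : ∀ x, 0 ≤ pX x) (hpC0 : ∀ x c, 0 ≤ pC x c) (x : X) (c : C) :
    0 ≤ pxc pX pC x c :=
  div_nonneg (mul_nonneg (hpX0 x) (hpC0 x c)) (pc_nonneg' pX pC hpX0 hpC0 c)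

lemma pac_nonneg' (hpX0 : ∀ x, 0 ≤ pX x) (hpC0 : ∀ x c, 0 ≤ pC x c)
    (ρ : X → A → ℝ) (hρ : ∀ x a, 0 ≤ ρ x a) (c : C) (a : A) :
    0 ≤ pac pX pC ρ c a :=
  Finset.sum_nonneg fun x _ =>
    mul_nonneg (pxc_nonneg' pX pC hpX0 hpC0 x c) (hρ x a)

lemma pXpC_rho_eq_zero' (hpX0 : ∀ x, 0 ≤ pX x) (hpC0 : ∀ x c, 0 ≤ pC x c)
    (ρ : X → A → ℝ) (hρ : ∀ x a, 0 ≤ ρ x a) {c : C} {a : A}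
    (h : pac pX pC ρ c a = 0) (x : X) : pX x * pC x c * ρ x a = 0 := by
  have h1 : pxc pX pC x c * ρ x a = 0 :=
    (Finset.sum_eq_zero_iff_of_nonneg (fun x _ =>
      mul_nonneg (pxc_nonneg' pX pC hpX0 hpC0 x c) (hρ x a))).1 h x (Finset.mem_univ x)
  calc pX x * pC x c * ρ x a
      = pc pX pC c * (pxc pX pC x c * ρ x a) := by
        rw [← mul_assoc, pc_mul_pxc' pX pC hpX0 hpC0 x c]
    _ = 0 := by rw [h1, mul_zero]

end Aux

lemma prop9_key (pX : X → ℝ) (pC : X → C → ℝ) (π π₀ : X → A → ℝ)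
    (qbar : A → C → ℝ) (ε : ℝ)
    (hpX0 : ∀ x, 0 ≤ pX x) (hpC0 : ∀ x c, 0 ≤ pC x c)
    (hπ₀ : ∀ x a, 0 ≤ π₀ x a) (c : C) (a : A) :
    (∑ x, pX x * pC x c * π₀ x a * (π x a / π₀ x a + ε) * qbar a c)
      - (∑ x, pX x * pC x c * π₀ x a * (pac pX pC π c a / pac pX pC π₀ c a) * qbar a c)
    = -(∑ x, if π₀ x a = 0 ∧ 0 < pac pX pC π₀ c a
          then pX x * pC x c * (π x a * qbar a c) else 0)
      + ε * ∑ x, pX x * pC x c * π₀ x a * qbar a c := by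
  by_cases h0 : pac pX pC π₀ c a = 0
  · have hz : ∀ x, pX x * pC x c * π₀ x a = 0 :=
      pXpC_rho_eq_zero' pX pC hpX0 hpC0 π₀ hπ₀ h0
    have hnpos : ¬ (0 < pac pX pC π₀ c a) := by rw [h0]; exact lt_irrefl 0
    simp only [hnpos, and_false, if_false, Finset.sum_const_zero, neg_zero]
    rw [Finset.sum_eq_zero fun x _ => by rw [hz x, zero_mul, zero_mul],
        Finset.sum_eq_zero fun x _ => by rw [hz x, zero_mul, zero_mul],
        Finset.sum_eq_zero fun x _ => by rw [hz x, zero_mul]]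
    ring
  · have hpos : 0 < pac pX pC π₀ c a := by
      exact lt_of_le_of_ne (pac_nonneg' pX pC hpX0 hpC0 π₀ hπ₀ c a) (Ne.symm h0)
    simp only [hpos, and_true]
    have hchips : (∑ x, pX x * pC x c * π₀ x a *
        (pac pX pC π c a / pac pX pC π₀ c a) * qbar a c)
        = ∑ x, pX x * pC x c * π x a * qbar a c := by
      have : (∑ x, pX x * pC x c * π₀ x a *
          (pac pX pC π c a / pac pX pC π₀ c a) * qbar a c)
          = (∑ x, pX x * pC x c * π₀ x a) *
            ((pac pX pC π c a / pac pX pC π₀ c a) * qbar a c) := by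
        rw [Finset.sum_mul]; exact Finset.sum_congr rfl fun x _ => by ring
      rw [this, ← pc_mul_pac' pX pC hpX0 hpC0 π₀ c a,
          ← Finset.sum_mul, ← pc_mul_pac' pX pC hpX0 hpC0 π c a]
      field_simp
    rw [hchips, ← Finset.sum_sub_distrib, Finset.mul_sum, ← Finset.sum_neg_distrib,
        ← Finset.sum_add_distrib]
    refine Finset.sum_congr rfl fun x _ => ?_
    by_cases hx : π₀ x a = 0
    · simp only [hx, if_true, mul_zero, zero_mul]
      ring
    · simp only [hx, if_false, neg_zero, zero_add]
      field_simp
      ring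

/-- Proposition 9, MR part (signed form). -/
theorem prop9_mr_minus_chips_bias
    (pX : X → ℝ) (pC : X → C → ℝ) (π π₀ : X → A → ℝ)
    (q : A → C → X → ℝ) (qbar : A → C → ℝ) (ε : ℝ)
    (hpX0 : ∀ x, 0 ≤ pX x) (hpX1 : ∑ x, pX x = 1)
    (hpC0 : ∀ x c, 0 ≤ pC x c) (hpC1 : ∀ x, ∑ c, pC x c = 1)
    (hπ : ∀ x a, 0 ≤ π x a) (hπ1 : ∀ x, ∑ a, π x a = 1)
    (hπ₀ : ∀ x a, 0 ≤ π₀ x a) (hπ₀1 : ∀ x, ∑ a, π₀ x a = 1)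
    (hA3 : ∀ (a : A) (c : C) (x : X), q a c x = qbar a c)
    (hqbar : ∀ a c, 0 ≤ qbar a c) :
    bias pX pC π π₀ q (fun x c a => wIPS π π₀ a x + ε)
      - bias pX pC π π₀ q (fun x c a => wCHIPS pX pC π π₀ a c)
    = -(∑ c, pc pX pC c * ∑ x, pxc pX pC x c * ∑ a,
          if π₀ x a = 0 ∧ 0 < pac pX pC π₀ c a then π x a * qbar a c else 0)
      + ε * ∑ c, pc pX pC c * ∑ a, pac pX pC π₀ c a * qbar a c := by
  simp only [bias, mu, wIPS, wCHIPS, hA3]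
  rw [sub_sub_sub_cancel_right]
  have L : ∀ (f : X → C → A → ℝ),
      (∑ x, ∑ c, ∑ a, f x c a) = ∑ c, ∑ a, ∑ x, f x c a := by
    intro f
    rw [Finset.sum_comm]
    exact Finset.sum_congr rfl fun c _ => Finset.sum_comm
  rw [L fun x c a => pX x * pC x c * π₀ x a * (π x a / π₀ x a + ε) * qbar a c,
      L fun x c a =>
        pX x * pC x c * π₀ x a * (pac pX pC π c a / pac pX pC π₀ c a) * qbar a c]
  have R1 : ∀ c : C, pc pX pC c * ∑ x, pxc pX pC x c * ∑ a,
        (if π₀ x a = 0 ∧ 0 < pac pX pC π₀ c a then π x a * qbar a c else 0)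
      = ∑ a, ∑ x, if π₀ x a = 0 ∧ 0 < pac pX pC π₀ c a
          then pX x * pC x c * (π x a * qbar a c) else 0 := by
    intro c
    rw [Finset.mul_sum, Finset.sum_comm]
    refine Finset.sum_congr rfl fun x _ => ?_
    rw [← mul_assoc, pc_mul_pxc' pX pC hpX0 hpC0 x c, Finset.mul_sum]
    exact Finset.sum_congr rfl fun a _ => by rw [mul_ite, mul_zero]
  have R2 : ∀ c : C, pc pX pC c * ∑ a, pac pX pC π₀ c a * qbar a c
      = ∑ a, ∑ x, pX x * pC x c * π₀ x a * qbar a c := by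
    intro c
    rw [Finset.mul_sum]
    refine Finset.sum_congr rfl fun a _ => ?_
    rw [← mul_assoc, pc_mul_pac' pX pC hpX0 hpC0 π₀ c a, Finset.sum_mul]
  simp only [R1, R2]
  rw [Finset.mul_sum, ← Finset.sum_neg_distrib, ← Finset.sum_add_distrib,
      ← Finset.sum_sub_distrib]
  refine Finset.sum_congr rfl fun c _ => ?_
  rw [Finset.mul_sum, ← Finset.sum_neg_distrib, ← Finset.sum_add_distrib,
      ← Finset.sum_sub_distrib]
  exact Finset.sum_congr rfl fun a _ =>
    prop9_key pX pC π π₀ qbar ε hpX0 hpC0 hπ₀ c a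

end

end OPE
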